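/- arXiv:1704.05206 — 3 statements merged into one kernel-verified Lean document; each statement's English description precedes it below -/
import Mathlib

section
/- Let $E$ be a 3-dimensional and $Q$ a 2-dimensional complex vector space. Consider $\widetilde{\mathcal A} = \{e^* \otimes q + f \otimes q^2 : e^* \in E^*, f \in E, q \in Q,\ \langle e^*, f\rangle = 0\} \subset (E^* \otimes Q) \oplus (E \otimes S^2Q)$. Then for $\beta = e^* \otimes q + f \otimes q^2 \in \widetilde{\mathcal A}$ with $e^*, f, q$ all nonzero, the set $T_\beta = \{e^* \otimes q' + e'^* \otimes q + f' \otimes q^2 + f \otimes (2q \circ q') : e'^* \in E^*, f' \in E, q' \in Q,\ \langle e'^*, f\rangle + \langle e^*, f'\rangle = 0\}$ is a linear subspace containing the velocity at $t=0$ of every smooth curve in $\widetilde{\mathcal A}$ through $\beta$. -/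
/-!
`T_β` is the image, under the linear map `(e', f', q') ↦ e* ⊗ q' + e'* ⊗ q + f' ⊗ q² + f ⊗ (2q ∘ q')`,
of the kernel of the linear functional `(e', f', q') ↦ ⟨e'*, f⟩ + ⟨e*, f'⟩`, hence a subspace.
For a curve `e_t ⊗ q_t + f_t ⊗ q_t²` the product rule gives a velocity of exactly this form with
`(e', f', q')` the velocities of the components, and differentiating `⟨e_t, f_t⟩ = 0` gives the
constraint.
-/

open Module

/-- Ambient space modelling `(E* ⊗ Q) ⊕ (E ⊗ S²Q)` with `E = ℂ³`, `Q = ℂ²`. -/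
abbrev AmbF := (Fin 3 → Fin 2 → ℂ) × (Fin 3 → Fin 2 → Fin 2 → ℂ)

/-- The canonical pairing `⟨e*, f⟩` in coordinates. -/
noncomputable def pairE (a b : Fin 3 → ℂ) : ℂ := ∑ i, a i * b i

/-- `e* ⊗ q`. -/
def outer (e : Fin 3 → ℂ) (q : Fin 2 → ℂ) : Fin 3 → Fin 2 → ℂ := fun i j => e i * q j

/-- `f ⊗ q²`. -/
def cube (f : Fin 3 → ℂ) (q : Fin 2 → ℂ) : Fin 3 → Fin 2 → Fin 2 → ℂ :=
  fun i j l => f i * q j * q l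

/-- `f ⊗ (2 q ∘ q')`. -/
def mixed (f : Fin 3 → ℂ) (q q' : Fin 2 → ℂ) : Fin 3 → Fin 2 → Fin 2 → ℂ :=
  fun i j l => f i * (q j * q' l + q' j * q l)

lemma pairE_eq_dotProduct (a b : Fin 3 → ℂ) : pairE a b = a ⬝ᵥ b := rfl

def tangentParam (estar f : Fin 3 → ℂ) (q : Fin 2 → ℂ) :
    (Fin 3 → ℂ) × (Fin 3 → ℂ) × (Fin 2 → ℂ) →ₗ[ℂ] AmbF where
  toFun p := (outer estar p.2.2 + outer p.1 q, cube p.2.1 q + mixed f q p.2.2)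
  map_add' p p' := by
    ext <;> simp only [outer, cube, mixed, Prod.fst_add, Prod.snd_add, Pi.add_apply] <;> ring
  map_smul' c p := by
    ext <;> simp only [outer, cube, mixed, Prod.smul_fst, Prod.smul_snd, Pi.smul_apply,
      Pi.add_apply, smul_eq_mul, RingHom.id_apply] <;> ring

noncomputable def tangentConstraint (estar f : Fin 3 → ℂ) :
    (Fin 3 → ℂ) × (Fin 3 → ℂ) × (Fin 2 → ℂ) →ₗ[ℂ] ℂ where
  toFun p := pairE p.1 f + pairE estar p.2.1
  map_add' p p' := by
    simp only [pairE_eq_dotProduct, Prod.fst_add, Prod.snd_add, add_dotProduct, dotProduct_add]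
    ring
  map_smul' c p := by
    simp only [pairE_eq_dotProduct, Prod.smul_fst, Prod.smul_snd, smul_dotProduct,
      dotProduct_smul, smul_eq_mul, RingHom.id_apply]
    ring

theorem coe_map_ker_tangentConstraint (estar f : Fin 3 → ℂ) (q : Fin 2 → ℂ) :
    (((LinearMap.ker (tangentConstraint estar f)).map (tangentParam estar f q) :
        Submodule ℂ AmbF) : Set AmbF) =
      {x | ∃ (e' f' : Fin 3 → ℂ) (q' : Fin 2 → ℂ),
        pairE e' f + pairE estar f' = 0 ∧
        x = (outer estar q' + outer e' q, cube f' q + mixed f q q')} := by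
  ext x
  simp only [Submodule.map_coe, Set.mem_image, SetLike.mem_coe, LinearMap.mem_ker, Prod.exists,
    Set.mem_ofPred_eq, tangentConstraint, tangentParam, LinearMap.coe_mk, AddHom.coe_mk, eq_comm]

section Derivatives

variable {e f : ℂ → Fin 3 → ℂ} {q : ℂ → Fin 2 → ℂ} {e' f' : Fin 3 → ℂ} {q' : Fin 2 → ℂ} {t : ℂ}

theorem HasDerivAt.pairE (he : HasDerivAt e e' t) (hf : HasDerivAt f f' t) :
    HasDerivAt (fun s => pairE (e s) (f s)) (pairE e' (f t) + pairE (e t) f') t := by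
  simp only [_root_.pairE, ← Finset.sum_add_distrib]
  exact HasDerivAt.fun_sum fun i _ => (hasDerivAt_pi.mp he i).fun_mul (hasDerivAt_pi.mp hf i)

theorem HasDerivAt.outer (he : HasDerivAt e e' t) (hq : HasDerivAt q q' t) :
    HasDerivAt (fun s => outer (e s) (q s)) (outer e' (q t) + outer (e t) q') t := by
  refine hasDerivAt_pi.mpr fun i => hasDerivAt_pi.mpr fun j => ?_
  exact (hasDerivAt_pi.mp he i).fun_mul (hasDerivAt_pi.mp hq j)

theorem HasDerivAt.cube (hf : HasDerivAt f f' t) (hq : HasDerivAt q q' t) :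
    HasDerivAt (fun s => cube (f s) (q s)) (cube f' (q t) + mixed (f t) (q t) q') t := by
  refine hasDerivAt_pi.mpr fun i => hasDerivAt_pi.mpr fun j => hasDerivAt_pi.mpr fun l => ?_
  refine (((hasDerivAt_pi.mp hf i).fun_mul (hasDerivAt_pi.mp hq j)).fun_mul
    (hasDerivAt_pi.mp hq l)).congr_deriv ?_
  simp only [_root_.cube, mixed, Pi.add_apply]
  ring

theorem pairE_add_pairE_eq_zero_of_hasDerivAt (hpair : ∀ s, pairE (e s) (f s) = 0)
    (he : HasDerivAt e e' t) (hf : HasDerivAt f f' t) :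
    pairE e' (f t) + pairE (e t) f' = 0 := by
  have hconst : HasDerivAt (fun s => pairE (e s) (f s)) 0 t := by
    simpa only [hpair] using hasDerivAt_const t (0 : ℂ)
  exact (he.pairE hf).unique hconst

end Derivatives

theorem tangent_space_of_F4_vmrt_cone_general
    (estar f : Fin 3 → ℂ) (q : Fin 2 → ℂ) :
    (∃ T : Submodule ℂ AmbF,
        (T : Set AmbF) =
          {x | ∃ (e' f' : Fin 3 → ℂ) (q' : Fin 2 → ℂ),
                pairE e' f + pairE estar f' = 0 ∧
                x = (outer estar q' + outer e' q, cube f' q + mixed f q q')}) ∧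
    (∀ (e_ f_ : ℂ → Fin 3 → ℂ) (q_ : ℂ → Fin 2 → ℂ) (γ : ℂ → AmbF) (v : AmbF),
        (∀ t, pairE (e_ t) (f_ t) = 0) →
        (∀ t, γ t = (outer (e_ t) (q_ t), cube (f_ t) (q_ t))) →
        e_ 0 = estar → f_ 0 = f → q_ 0 = q →
        DifferentiableAt ℂ e_ 0 → DifferentiableAt ℂ f_ 0 → DifferentiableAt ℂ q_ 0 →
        HasDerivAt γ v 0 →
        v ∈ {x : AmbF | ∃ (e' f' : Fin 3 → ℂ) (q' : Fin 2 → ℂ),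
                pairE e' f + pairE estar f' = 0 ∧
                x = (outer estar q' + outer e' q, cube f' q + mixed f q q')}) := by
  refine ⟨⟨_, coe_map_ker_tangentConstraint estar f q⟩, ?_⟩
  rintro e_ f_ q_ γ v hpair hγ rfl rfl rfl he hf hq hv
  have hγ' : HasDerivAt γ (outer (e_ 0) (deriv q_ 0) + outer (deriv e_ 0) (q_ 0),
      cube (deriv f_ 0) (q_ 0) + mixed (f_ 0) (q_ 0) (deriv q_ 0)) 0 := by
    rw [funext hγ, add_comm (outer _ _)]
    exact (he.hasDerivAt.outer hq.hasDerivAt).prodMk (hf.hasDerivAt.cube hq.hasDerivAt)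
  exact ⟨deriv e_ 0, deriv f_ 0, deriv q_ 0,
    pairE_add_pairE_eq_zero_of_hasDerivAt hpair he.hasDerivAt hf.hasDerivAt, hv.unique hγ'⟩

/-- at `β = e* ⊗ q + f ⊗ q² ∈ Ã` (all of `e*`, `f`, `q` nonzero) the set
`T_β = {e* ⊗ q' + e'* ⊗ q + f' ⊗ q² + f ⊗ (2q ∘ q') : ⟨e'*, f⟩ + ⟨e*, f'⟩ = 0}` is a
linear subspace containing the velocity at `t = 0` of every smooth curve in
`Ã = {e* ⊗ q + f ⊗ q² : ⟨e*, f⟩ = 0}` through `β`. -/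
theorem tangent_space_of_F4_vmrt_cone
    (estar f : Fin 3 → ℂ) (q : Fin 2 → ℂ)
    (he : estar ≠ 0) (hf : f ≠ 0) (hq : q ≠ 0) (hef : pairE estar f = 0) :
    (∃ T : Submodule ℂ AmbF,
        (T : Set AmbF) =
          {x | ∃ (e' f' : Fin 3 → ℂ) (q' : Fin 2 → ℂ),
                pairE e' f + pairE estar f' = 0 ∧
                x = (outer estar q' + outer e' q, cube f' q + mixed f q q')}) ∧
    (∀ (e_ f_ : ℂ → Fin 3 → ℂ) (q_ : ℂ → Fin 2 → ℂ) (γ : ℂ → AmbF) (v : AmbF),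
        (∀ t, pairE (e_ t) (f_ t) = 0) →
        (∀ t, γ t = (outer (e_ t) (q_ t), cube (f_ t) (q_ t))) →
        e_ 0 = estar → f_ 0 = f → q_ 0 = q →
        DifferentiableAt ℂ e_ 0 → DifferentiableAt ℂ f_ 0 → DifferentiableAt ℂ q_ 0 →
        HasDerivAt γ v 0 →
        v ∈ {x : AmbF | ∃ (e' f' : Fin 3 → ℂ) (q' : Fin 2 → ℂ),
                pairE e' f + pairE estar f' = 0 ∧
                x = (outer estar q' + outer e' q, cube f' q + mixed f q q')}) :=
  tangent_space_of_F4_vmrt_cone_general estar f q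
end

section
/- Let $E, Q$ be complex vector spaces with $\dim E = 3$, $\dim Q = 2$. Fix a 1-dimensional subspace $F^* \subset E^*$ and set $(F^*)^\perp = \{f \in E : \langle e^*, f\rangle = 0\ \forall e^* \in F^*\}$ (a 2-dimensional subspace). Then the linear subspace $W = (F^* \otimes Q) \oplus ((F^*)^\perp \otimes S^2Q)$ of $(E^* \otimes Q) \oplus (E \otimes S^2Q)$ satisfies: $\{e^* \otimes q + f \otimes q^2 : e^* \in F^*, f \in (F^*)^\perp, q \in Q\} = W \cap \widetilde{\mathcal A}'$, where $\widetilde{\mathcal A}' = \{e^* \otimes q + f \otimes q^2 : \langle e^*, f\rangle = 0, e^* \in E^*, f \in E, q \in Q\}$. -/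
open Module

/-- Pairing with a fixed vector, as a linear map. -/
noncomputable def dotL (a : Fin 3 → ℂ) : (Fin 3 → ℂ) →ₗ[ℂ] ℂ where
  toFun g := ∑ i, a i * g i
  map_add' x y := by simp [mul_add, Finset.sum_add_distrib]
  map_smul' c x := by simp [Finset.mul_sum, mul_left_comm]

/-- for a fixed one-dimensional subspace `F* ⊂ E*` with (two-dimensional)
annihilator `(F*)^⊥ ⊂ E`, the linear subspace `W = (F* ⊗ Q) ⊕ ((F*)^⊥ ⊗ S²Q)` cuts out of
`Ã' = {e* ⊗ q + f ⊗ q² : ⟨e*, f⟩ = 0}` exactly the set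
`{e* ⊗ q + f ⊗ q² : e* ∈ F*, f ∈ (F*)^⊥, q ∈ Q}`. -/
theorem B3_vmrt_is_linear_section_of_F4_vmrt
    (Fstar : Submodule ℂ (Fin 3 → ℂ)) (hFstar : finrank ℂ Fstar = 1) :
    ∃ P : Submodule ℂ (Fin 3 → ℂ),
      (∀ g : Fin 3 → ℂ, g ∈ P ↔ ∀ e ∈ Fstar, pairE e g = 0) ∧
      finrank ℂ P = 2 ∧
      ∃ W : Submodule ℂ AmbF,
        (∀ x : AmbF, x ∈ W ↔
            (∀ j, (fun i => x.1 i j) ∈ Fstar) ∧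
            (∀ j l, (fun i => x.2 i j l) ∈ P) ∧
            (∀ i j l, x.2 i j l = x.2 i l j)) ∧
        {x : AmbF | ∃ e ∈ Fstar, ∃ g ∈ P, ∃ q : Fin 2 → ℂ, x = (outer e q, cube g q)}
          = (W : Set AmbF) ∩
            {x : AmbF | ∃ (e' f' : Fin 3 → ℂ) (q' : Fin 2 → ℂ),
                pairE e' f' = 0 ∧ x = (outer e' q', cube f' q')} := by
  -- pick a generator of Fstar
  obtain ⟨v, hv0, hvspan⟩ := (finrank_eq_one_iff' (K := ℂ) (V := Fstar)).mp hFstar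
  set e₀ : Fin 3 → ℂ := (v : Fin 3 → ℂ) with he₀
  have he₀mem : e₀ ∈ Fstar := v.2
  have he₀ne : e₀ ≠ 0 := fun h => hv0 (Subtype.ext h)
  have hmul : ∀ e ∈ Fstar, ∃ c : ℂ, e = c • e₀ := by
    intro e he
    obtain ⟨c, hc⟩ := hvspan ⟨e, he⟩
    exact ⟨c, by simpa [he₀] using congrArg (Subtype.val) hc.symm⟩
  set P : Submodule ℂ (Fin 3 → ℂ) := LinearMap.ker (dotL e₀) with hP
  have hPmem : ∀ g : Fin 3 → ℂ, g ∈ P ↔ ∀ e ∈ Fstar, pairE e g = 0 := by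
    intro g
    constructor
    · intro hg e he
      obtain ⟨c, rfl⟩ := hmul e he
      have hg' : ∑ i, e₀ i * g i = 0 := hg
      simp only [pairE, Pi.smul_apply, smul_eq_mul, mul_assoc, ← Finset.mul_sum, hg', mul_zero]
    · intro h
      exact h e₀ he₀mem
  refine ⟨P, hPmem, ?_, ?_⟩
  · -- finrank P = 2
    have hsurj : LinearMap.range (dotL e₀) = ⊤ := by
      rw [LinearMap.range_eq_top]
      intro c
      obtain ⟨i, hi⟩ : ∃ i, e₀ i ≠ 0 := by
        by_contra h
        push_neg at h
        exact he₀ne (funext h)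
      refine ⟨Pi.single i (c / e₀ i), ?_⟩
      simp only [dotL, LinearMap.coe_mk, AddHom.coe_mk]
      rw [Finset.sum_eq_single i]
      · rw [Pi.single_eq_same]; field_simp
      · intro b _ hb; simp [Pi.single_eq_of_ne hb]
      · simp
    have := LinearMap.finrank_range_add_finrank_ker (dotL e₀)
    rw [hsurj] at this
    simp only [finrank_top, finrank_self] at this
    have h3 : finrank ℂ (Fin 3 → ℂ) = 3 := by simp
    rw [← hP] at this
    omega
  · -- construct W
    let W : Submodule ℂ AmbF :=
      { carrier := {x : AmbF |
          (∀ j, (fun i => x.1 i j) ∈ Fstar) ∧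
          (∀ j l, (fun i => x.2 i j l) ∈ P) ∧
          (∀ i j l, x.2 i j l = x.2 i l j)},
        add_mem' := by
          rintro a b ⟨ha1, ha2, ha3⟩ ⟨hb1, hb2, hb3⟩
          exact ⟨fun j => Fstar.add_mem (ha1 j) (hb1 j),
            fun j l => P.add_mem (ha2 j l) (hb2 j l),
            fun i j l => by simp only [Prod.snd_add, Pi.add_apply, ha3 i j l, hb3 i j l]⟩,
        zero_mem' := ⟨fun j => Fstar.zero_mem, fun j l => P.zero_mem, fun i j l => rfl⟩,
        smul_mem' := by
          rintro c a ⟨ha1, ha2, ha3⟩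
          refine ⟨fun j => ?_, fun j l => ?_, fun i j l => ?_⟩
          · exact Fstar.smul_mem c (ha1 j)
          · exact P.smul_mem c (ha2 j l)
          · simp only [Prod.smul_snd, Pi.smul_apply, ha3 i j l] }
    refine ⟨W, fun x => Iff.rfl, ?_⟩
    -- set equality
    ext x
    simp only [Set.mem_setOf_eq, Set.mem_inter_iff, SetLike.mem_coe]
    constructor
    · rintro ⟨e, he, g, hg, q, rfl⟩
      refine ⟨⟨fun j => ?_, fun j l => ?_, fun i j l => by simp only [cube]; ring⟩,
        e, g, q, (hPmem g).mp hg e he, rfl⟩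
      · have h := Fstar.smul_mem (q j) he
        convert h using 1
        funext i; simp [outer, mul_comm]
      · have h := P.smul_mem (q j * q l) hg
        convert h using 1
        funext i; simp only [cube, Pi.smul_apply, smul_eq_mul]; ring
    · rintro ⟨⟨h1, h2, -⟩, e', f', q', hpair, rfl⟩
      by_cases hq : q' = 0
      · refine ⟨0, Fstar.zero_mem, 0, P.zero_mem, 0, ?_⟩
        subst hq
        refine Prod.ext ?_ ?_
        · funext i j; simp [outer]
        · funext i j l; simp [cube]
      · obtain ⟨j, hj⟩ : ∃ j, q' j ≠ 0 := by
          by_contra h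
          push_neg at h
          exact hq (funext h)
        have he' : e' ∈ Fstar := by
          have h := Fstar.smul_mem (q' j)⁻¹ (h1 j)
          have heq : (q' j)⁻¹ • (fun i => (outer e' q', cube f' q').1 i j) = e' := by
            funext i
            simp only [outer, Pi.smul_apply, smul_eq_mul]
            field_simp
          rwa [heq] at h
        have hf' : f' ∈ P := by
          have h := P.smul_mem ((q' j)⁻¹ * (q' j)⁻¹) (h2 j j)
          have heq : ((q' j)⁻¹ * (q' j)⁻¹) • (fun i => (outer e' q', cube f' q').2 i j j) = f' := by
            funext i
            simp only [cube, Pi.smul_apply, smul_eq_mul]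
            field_simp
          rwa [heq] at h
        exact ⟨e', he', f', hf', q', rfl⟩
end

section
/- Let $E, Q$ be complex vector spaces with $\dim E = 3$, $\dim Q = 2$. Fix $F^* \subset E^*$ one-dimensional and let $(F^*)^\perp \subset E$ be its annihilator. Let $\sigma_\beta$ be the second fundamental form of $\widetilde{\mathcal A} = \{e^* \otimes q + f\otimes q^2 : \langle e^*,f\rangle = 0\}$ at a point $\beta = e^* \otimes q$ with $0 \neq e^* \in F^*$, $0 \neq q \in Q$, determined by: $\sigma(e^*\otimes q', e^*\otimes q'')=0$, $\sigma(e^*\otimes q', e'^*\otimes q)=e'^*\otimes q'$, $\sigma(e^*\otimes q', f'\otimes q^2)=f'\otimes(2q\circ q')$, $\sigma(e'^*\otimes q, e''^*\otimes q)=0$, $\sigma(e'^*\otimes q, f'\otimes q^2)=(-\langle e'^*,f'\rangle e)\otimes q^2$, $\sigma(f'\otimes q^2, f''\otimes q^2)=0$ (values modulo $T_\beta\widetilde{\mathcal A}$). Let $T_\beta\widetilde{\mathcal B} = \{e^*\otimes q' + e'^*\otimes q + f'\otimes q^2 : e'^* \in F^*, f' \in (F^*)^\perp, q' \in Q\}$.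 Then $\{\zeta \in T_\beta\widetilde{\mathcal A} : \sigma_\beta(\zeta,\xi)=0\ \forall\xi \in T_\beta\widetilde{\mathcal B}\} = \mathbb{C}\beta$. -/
open Module

@[simp]
lemma outer_zero_left (q : Fin 2 → ℂ) : outer 0 q = 0 := by
  funext i j; simp [outer]

lemma outer_smul_right (e : Fin 3 → ℂ) (c : ℂ) (q : Fin 2 → ℂ) :
    outer e (c • q) = c • outer e q := by
  funext i j; simp only [outer, Pi.smul_apply, smul_eq_mul]; ring

lemma outer_add_outer_smul (e : Fin 3 → ℂ) (q₀ q : Fin 2 → ℂ) (b : ℂ) :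
    outer e q₀ + outer (b • e) q = outer e (q₀ + b • q) := by
  funext i j; simp only [outer, Pi.add_apply, Pi.smul_apply, smul_eq_mul]; ring

lemma pairE_eq_zero_of_mem {F : Submodule ℂ (Fin 3 → ℂ)} (hF : finrank ℂ F = 1)
    {e f a : Fin 3 → ℂ} (he : e ≠ 0) (heF : e ∈ F) (hf : pairE e f = 0) (ha : a ∈ F) :
    pairE a f = 0 := by
  obtain ⟨c, hc⟩ :=
    (finrank_eq_one_iff_of_nonzero' (⟨e, heF⟩ : F) (by simpa using he)).mp hF ⟨a, ha⟩
  rw [show a = c • e from (congrArg Subtype.val hc).symm, pairE_eq_dotProduct, smul_dotProduct,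
    ← pairE_eq_dotProduct, hf, smul_zero]

@[simp]
lemma cube_zero (q : Fin 2 → ℂ) : cube 0 q = 0 := by
  funext i j l; simp [cube]

def wedge (q v : Fin 2 → ℂ) : ℂ := q 0 * v 1 - q 1 * v 0

lemma wedge_smul_right_self (q : Fin 2 → ℂ) (c : ℂ) : wedge q (c • q) = 0 := by
  simp only [wedge, Pi.smul_apply, smul_eq_mul]; ring

lemma exists_wedge_eq_one {q : Fin 2 → ℂ} (hq : q ≠ 0) : ∃ p, wedge q p = 1 := by
  by_cases h0 : q 0 = 0
  · have h1 : q 1 ≠ 0 := fun h1 => hq (funext fun j => by fin_cases j <;> assumption)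
    exact ⟨![-(q 1)⁻¹, 0], by simp [wedge, h0, h1]⟩
  · exact ⟨![0, (q 0)⁻¹], by simp [wedge, h0]⟩

lemma eq_smul_of_symm_mul_eq {K κ : Type*} [Field K] [NeZero (2 : K)] {q r : κ → K} {c : K}
    (hq : q ≠ 0) (h : ∀ j l, q j * r l + r j * q l = 2 * c * (q j * q l)) : r = c • q := by
  obtain ⟨k, hk⟩ := Function.ne_iff.mp hq
  have hrk : r k = c * q k :=
    mul_left_cancel₀ (mul_ne_zero two_ne_zero hk) (by linear_combination h k k)
  funext l
  exact mul_left_cancel₀ hk <| by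
    simp only [Pi.smul_apply, smul_eq_mul]; linear_combination h k l - q l * hrk

lemma exists_eq_smul_of_mixed_eq_cube {f g : Fin 3 → ℂ} {q r : Fin 2 → ℂ} {i : Fin 3}
    (hfi : f i ≠ 0) (hq : q ≠ 0) (h : mixed f q r = cube g q) : ∃ c : ℂ, r = c • q := by
  refine ⟨g i / (2 * f i), eq_smul_of_symm_mul_eq hq fun j l => ?_⟩
  have := congrFun (congrFun (congrFun h i) j) l
  simp only [mixed, cube] at this
  field_simp
  linear_combination this

lemma eq_zero_of_mixed_eq_cube {f g : Fin 3 → ℂ} {q p : Fin 2 → ℂ} (hqp : wedge q p ≠ 0)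
    (h : mixed f q p = cube g q) : f = 0 := by
  have hq : q ≠ 0 := by rintro rfl; simp [wedge] at hqp
  funext i
  by_contra hfi
  obtain ⟨c, rfl⟩ := exists_eq_smul_of_mixed_eq_cube hfi hq h
  exact hqp (wedge_smul_right_self q c)

lemma wedge_smul_of_outer_eq {e a b : Fin 3 → ℂ} {p r q : Fin 2 → ℂ}
    (h : outer e p = outer a r + outer b q) : wedge q p • e = wedge q r • a := by
  funext i
  have h0 := congrFun (congrFun h i) 0
  have h1 := congrFun (congrFun h i) 1
  simp only [outer, Pi.add_apply] at h0 h1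
  simp only [wedge, Pi.smul_apply, smul_eq_mul]
  linear_combination q 0 * h1 - q 1 * h0

/-- The tangent space `T_β Ã` at `β = e* ⊗ q`. -/
def tangentA (estar : Fin 3 → ℂ) (q : Fin 2 → ℂ) : Set AmbF :=
  {x | ∃ (e' f' : Fin 3 → ℂ) (q' : Fin 2 → ℂ),
    pairE estar f' = 0 ∧ x = (outer estar q' + outer e' q, cube f' q)}

section tangentA

variable {estar : Fin 3 → ℂ} {q : Fin 2 → ℂ}

lemma outer_mixed_self_mem_tangentA (e : Fin 3 → ℂ) {f : Fin 3 → ℂ} (hf : pairE estar f = 0) :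
    ((outer e q, mixed f q q) : AmbF) ∈ tangentA estar q := by
  refine ⟨e, (2 : ℂ) • f, 0, ?_, ?_⟩
  · rw [pairE_eq_dotProduct, dotProduct_smul, ← pairE_eq_dotProduct, hf, smul_zero]
  · ext i j <;> simp [outer, mixed, cube]
    ring

lemma outer_mem_tangentA (estar : Fin 3 → ℂ) (q : Fin 2 → ℂ) :
    ((outer estar q, 0) : AmbF) ∈ tangentA estar q :=
  ⟨0, 0, q, by simp [pairE], by ext <;> simp [outer, cube]⟩

lemma exists_smul_of_outer_mixed_mem_tangentA {e f : Fin 3 → ℂ} {p : Fin 2 → ℂ}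
    (hp : wedge q p = 1) (h : ((outer e p, mixed f q p) : AmbF) ∈ tangentA estar q) :
    f = 0 ∧ ∃ b : ℂ, e = b • estar := by
  obtain ⟨e', f', q', -, heq⟩ := h
  obtain ⟨hX, hY⟩ := Prod.ext_iff.mp heq
  refine ⟨eq_zero_of_mixed_eq_cube (by simp [hp]) hY, wedge q q', ?_⟩
  simpa [hp] using wedge_smul_of_outer_eq hX

lemma exists_eq_smul_of_mixed_mem_tangentA {x : Fin 3 → Fin 2 → ℂ} {f : Fin 3 → ℂ}
    {r : Fin 2 → ℂ} (hf : f ≠ 0) (hq : q ≠ 0) (h : ((x, mixed f q r) : AmbF) ∈ tangentA estar q) :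
    ∃ c : ℂ, r = c • q := by
  obtain ⟨i, hi⟩ := Function.ne_iff.mp hf
  obtain ⟨_, g, _, _, heq⟩ := h
  exact exists_eq_smul_of_mixed_eq_cube hi hq (Prod.ext_iff.mp heq).2

end tangentA

lemma sigma_outer_apply {estar : Fin 3 → ℂ} {q : Fin 2 → ℂ} {TA : Submodule ℂ AmbF}
    (σ : AmbF →ₗ[ℂ] AmbF →ₗ[ℂ] (AmbF ⧸ TA))
    (hA : ∀ q' q'' : Fin 2 → ℂ, σ (outer estar q', 0) (outer estar q'', 0) = 0)
    (hB : ∀ (q' : Fin 2 → ℂ) (e' : Fin 3 → ℂ),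
        σ (outer estar q', 0) (outer e' q, 0) = TA.mkQ (outer e' q', 0))
    (hC : ∀ (q' : Fin 2 → ℂ) (f' : Fin 3 → ℂ), pairE estar f' = 0 →
        σ (outer estar q', 0) (0, cube f' q) = TA.mkQ (0, mixed f' q q'))
    (r q' : Fin 2 → ℂ) (e' : Fin 3 → ℂ) {f' : Fin 3 → ℂ} (hf' : pairE estar f' = 0) :
    σ (outer estar r, 0) (outer estar q' + outer e' q, cube f' q)
      = TA.mkQ (outer e' r, mixed f' q r) := by
  have hsplit : ((outer estar q' + outer e' q, cube f' q) : AmbF)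
      = (outer estar q', 0) + (outer e' q, 0) + (0, cube f' q) := by simp
  rw [hsplit, map_add, map_add, hA, hB, hC r f' hf', zero_add, ← map_add, Prod.mk_add_mk,
    add_zero, zero_add]

theorem nondegeneracy_F4_case_general
    (Fstar : Submodule ℂ (Fin 3 → ℂ)) (hFstar : finrank ℂ Fstar = 1)
    (estar : Fin 3 → ℂ) (q : Fin 2 → ℂ)
    (he : estar ≠ 0) (heF : estar ∈ Fstar) (hq : q ≠ 0)
    (TA : Submodule ℂ AmbF)
    (hTA : (TA : Set AmbF) =
      {x | ∃ (e' f' : Fin 3 → ℂ) (q' : Fin 2 → ℂ),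
            pairE estar f' = 0 ∧ x = (outer estar q' + outer e' q, cube f' q)})
    (σ : AmbF →ₗ[ℂ] AmbF →ₗ[ℂ] (AmbF ⧸ TA))
    (hsymm : ∀ x y : AmbF, σ x y = σ y x)
    (hA : ∀ q' q'' : Fin 2 → ℂ, σ (outer estar q', 0) (outer estar q'', 0) = 0)
    (hB : ∀ (q' : Fin 2 → ℂ) (e' : Fin 3 → ℂ),
        σ (outer estar q', 0) (outer e' q, 0) = TA.mkQ (outer e' q', 0))
    (hC : ∀ (q' : Fin 2 → ℂ) (f' : Fin 3 → ℂ), pairE estar f' = 0 →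
        σ (outer estar q', 0) (0, cube f' q) = TA.mkQ (0, mixed f' q q')) :
    {ζ : AmbF | ζ ∈ TA ∧
        ∀ ξ ∈ {x : AmbF | ∃ (e' f' : Fin 3 → ℂ) (q' : Fin 2 → ℂ),
                e' ∈ Fstar ∧ (∀ a ∈ Fstar, pairE a f' = 0) ∧
                x = (outer estar q' + outer e' q, cube f' q)},
          σ ζ ξ = 0}
      = {x : AmbF | ∃ c : ℂ, x = c • ((outer estar q, 0) : AmbF)} := by
  have hTA' : ∀ x, x ∈ TA ↔ x ∈ tangentA estar q := fun x => by
    rw [← SetLike.mem_coe, hTA]; rfl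
  have hmkQ : ∀ x, TA.mkQ x = 0 ↔ x ∈ tangentA estar q := fun x => by
    rw [Submodule.mkQ_apply, Submodule.Quotient.mk_eq_zero, hTA']
  have hσ := sigma_outer_apply σ hA hB hC
  ext ζ
  constructor
  · rintro ⟨hζ, hker⟩
    obtain ⟨e₁, f₁, q₀, hf₁, rfl⟩ := (hTA' ζ).mp hζ
    obtain ⟨p, hp⟩ := exists_wedge_eq_one hq
    have h₁ := hker _ ⟨0, 0, p, Fstar.zero_mem, fun a _ => by simp [pairE], rfl⟩
    rw [hsymm, outer_zero_left, cube_zero, add_zero, hσ p q₀ e₁ hf₁, hmkQ] at h₁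
    obtain ⟨rfl, b, rfl⟩ := exists_smul_of_outer_mixed_mem_tangentA hp h₁
    rw [cube_zero, outer_add_outer_smul] at hker ⊢
    obtain ⟨f, hf, hfe⟩ := exists_ne_zero_dotProduct_eq_zero estar
    have hf' : pairE estar f = 0 := by rw [pairE_eq_dotProduct, dotProduct_comm, hfe]
    have h₂ :=
      hker _ ⟨0, f, 0, Fstar.zero_mem, fun _ => pairE_eq_zero_of_mem hFstar he heF hf', rfl⟩
    rw [hσ _ 0 0 hf', hmkQ] at h₂
    obtain ⟨c, hc⟩ := exists_eq_smul_of_mixed_mem_tangentA hf hq h₂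
    exact ⟨c, by rw [hc, outer_smul_right, Prod.smul_mk, smul_zero]⟩
  · rintro ⟨c, rfl⟩
    refine ⟨TA.smul_mem c ((hTA' _).mpr (outer_mem_tangentA estar q)), ?_⟩
    rintro _ ⟨e', f', q', -, hf', rfl⟩
    rw [map_smul, LinearMap.smul_apply, hσ q q' e' (hf' estar heF),
      (hmkQ _).mpr (outer_mixed_self_mem_tangentA e' (hf' estar heF)), smul_zero]

/-- nondegeneracy of the pair of VMRT's for `(B₃, α₂, α₃) ⊂ (F₄, α₃)` at a
point `β = e* ⊗ q` (with `0 ≠ e* ∈ F*`, `q ≠ 0`).  `TA` is the tangent space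
`T_β Ã = {e* ⊗ q' + e'* ⊗ q + f' ⊗ q² : ⟨e*, f'⟩ = 0}`, the second fundamental form `σ`
(symmetric, values modulo `TA`) is prescribed on the listed generator pairs (with `e`
corresponding to `e*` under the fixed inner product), and
`T_β B̃ = {e* ⊗ q' + e'* ⊗ q + f' ⊗ q² : e'* ∈ F*, f' ∈ (F*)^⊥}`.  Then
`Ker σ_β(·, T_β B̃) = ℂ β`. -/
theorem nondegeneracy_F4_case
    (Fstar : Submodule ℂ (Fin 3 → ℂ)) (hFstar : finrank ℂ Fstar = 1)
    (estar : Fin 3 → ℂ) (q : Fin 2 → ℂ)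
    (he : estar ≠ 0) (heF : estar ∈ Fstar) (hq : q ≠ 0)
    (TA : Submodule ℂ AmbF)
    (hTA : (TA : Set AmbF) =
      {x | ∃ (e' f' : Fin 3 → ℂ) (q' : Fin 2 → ℂ),
            pairE estar f' = 0 ∧ x = (outer estar q' + outer e' q, cube f' q)})
    (σ : AmbF →ₗ[ℂ] AmbF →ₗ[ℂ] (AmbF ⧸ TA))
    (hsymm : ∀ x y : AmbF, σ x y = σ y x)
    (hA : ∀ q' q'' : Fin 2 → ℂ, σ (outer estar q', 0) (outer estar q'', 0) = 0)
    (hB : ∀ (q' : Fin 2 → ℂ) (e' : Fin 3 → ℂ),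
        σ (outer estar q', 0) (outer e' q, 0) = TA.mkQ (outer e' q', 0))
    (hC : ∀ (q' : Fin 2 → ℂ) (f' : Fin 3 → ℂ), pairE estar f' = 0 →
        σ (outer estar q', 0) (0, cube f' q) = TA.mkQ (0, mixed f' q q'))
    (hD : ∀ e' e'' : Fin 3 → ℂ, σ (outer e' q, 0) (outer e'' q, 0) = 0)
    (hE : ∀ e' f' : Fin 3 → ℂ, pairE estar f' = 0 →
        σ (outer e' q, 0) (0, cube f' q) = TA.mkQ (0, (-(pairE e' f')) • cube estar q))
    (hF : ∀ f' f'' : Fin 3 → ℂ, pairE estar f' = 0 → pairE estar f'' = 0 →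
        σ (0, cube f' q) (0, cube f'' q) = 0) :
    {ζ : AmbF | ζ ∈ TA ∧
        ∀ ξ ∈ {x : AmbF | ∃ (e' f' : Fin 3 → ℂ) (q' : Fin 2 → ℂ),
                e' ∈ Fstar ∧ (∀ a ∈ Fstar, pairE a f' = 0) ∧
                x = (outer estar q' + outer e' q, cube f' q)},
          σ ζ ξ = 0}
      = {x : AmbF | ∃ c : ℂ, x = c • ((outer estar q, 0) : AmbF)} :=
  nondegeneracy_F4_case_general Fstar hFstar estar q he heF hq TA hTA σ hsymm hA hB hC
end
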